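/- Replacing the true constant weight on negatives by the debiased weights preserves the value in expectation: with π₀(u) = Q·𝟙[u ∉ D]/Σ_{u'∈N⁻}𝟙[u' ∉ D] applied to a multiset N⁻ of i.i.d. draws from p (conditioned on at least one draw landing outside D), the conditional expectation of Σ_{u∈N⁻} π₀(u)·g(u) equals Q·E_{u~p|u∉D}[g(u)]. -/

import Mathlib

/-!
Split the draws according to the set `A` of indices that land outside `D`. The event
`{i | xᵢ ∉ D} = A` is the box `∏ᵢ (if i ∈ A then Dᶜ else D)`, on which the coordinates stay
independent and every debiased weight equals `Q / |A|`. For `i ∈ A` the sum of `g (xᵢ)` over the box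
therefore factors as `E_{p|Dᶜ}[g]` times the mass of the box, and the `|A|` indices in `A` cancel
the factor `1 / |A|`.
-/

open Finset

universe u₁ u₂ u₃

section
variable {ι : Type u₁} {U : Type u₂} {R : Type u₃} [Fintype ι] [DecidableEq ι] [CommSemiring R]

theorem sum_piFinset_apply_mul_prod (t : ι → Finset U) (w v : U → R) (i : ι) :
    ∑ x ∈ Fintype.piFinset t, v (x i) * ∏ j, w (x j) =
      (∑ u ∈ t i, w u * v u) * ∏ j ∈ univ.erase i, ∑ u ∈ t j, w u := by
  set f : ι → U → R := fun j u => if j = i then w u * v u else w u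
  have hf : ∀ x : ι → U, v (x i) * ∏ j, w (x j) = ∏ j, f j (x j) := fun x => by
    rw [← mul_prod_erase _ _ (mem_univ i), ← mul_prod_erase _ _ (mem_univ i),
      prod_congr rfl fun j hj => if_neg (ne_of_mem_erase hj)]
    simp only [f, if_pos, mul_left_comm, mul_assoc]
  rw [sum_congr rfl fun x _ => hf x, ← prod_univ_sum, ← mul_prod_erase _ _ (mem_univ i),
    prod_congr rfl fun j hj => sum_congr rfl fun u _ => if_neg (ne_of_mem_erase hj)]
  simp only [f, if_pos]

theorem sum_piFinset_apply_mul_prod_mul_sum (t : ι → Finset U) (w g : U → R) (i : ι) :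
    (∑ x ∈ Fintype.piFinset t, g (x i) * ∏ j, w (x j)) * ∑ u ∈ t i, w u =
      (∑ u ∈ t i, w u * g u) * ∑ x ∈ Fintype.piFinset t, ∏ j, w (x j) := by
  have hmass := sum_piFinset_apply_mul_prod t w 1 i
  simp only [Pi.one_apply, one_mul, mul_one] at hmass
  rw [sum_piFinset_apply_mul_prod, hmass]
  ring

end

section
variable {ι : Type u₁} {U : Type u₂} [Fintype ι] [DecidableEq ι] [Fintype U] [DecidableEq U]
  (D : Finset U)

noncomputable def debiasedWeight (Q : ℝ) (x : ι → U) (i : ι) : ℝ :=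
  if x i ∉ D then Q / ((univ.filter fun i' => x i' ∉ D).card : ℝ) else 0

theorem filter_notMem_eq_iff_mem_piFinset {x : ι → U} {A : Finset ι} :
    univ.filter (fun i => x i ∉ D) = A ↔
      x ∈ Fintype.piFinset fun i => if i ∈ A then Dᶜ else D := by
  simp only [Finset.ext_iff, mem_filter, mem_univ, true_and, Fintype.mem_piFinset]
  refine forall_congr' fun i => ?_
  split_ifs with hi <;> simp [hi]

theorem sum_eq_sum_sum_piFinset_notMem {M : Type u₃} [AddCommMonoid M]
    (φ : Finset ι → (ι → U) → M) :
    ∑ x : ι → U, φ (univ.filter fun i => x i ∉ D) x =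
      ∑ A, ∑ x ∈ Fintype.piFinset (fun i => if i ∈ A then Dᶜ else D), φ A x := by
  rw [← sum_fiberwise univ (fun x : ι → U => univ.filter fun i => x i ∉ D)]
  refine sum_congr rfl fun A _ => ?_
  have hfiber : univ.filter (fun x : ι → U => (univ.filter fun i => x i ∉ D) = A) =
      Fintype.piFinset (fun i => if i ∈ A then Dᶜ else D) := by
    ext x
    simp [filter_notMem_eq_iff_mem_piFinset]
  rw [hfiber]
  exact sum_congr rfl fun x hx => by
    rw [(filter_notMem_eq_iff_mem_piFinset D).2 hx]

theorem pow_card_le_sum_prod_of_exists_notMem [Nonempty ι]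
    [∀ x : ι → U, Decidable (∃ i, x i ∉ D)] {p : U → ℝ} (hp : ∀ u, 0 ≤ p u) :
    (∑ u ∈ Dᶜ, p u) ^ Fintype.card ι ≤
      ∑ x : ι → U, if ∃ i, x i ∉ D then ∏ i, p (x i) else 0 := by
  obtain ⟨i₀⟩ := ‹Nonempty ι›
  calc (∑ u ∈ Dᶜ, p u) ^ Fintype.card ι
      = ∑ x ∈ Fintype.piFinset fun _ => Dᶜ, ∏ i : ι, p (x i) := by
        rw [← prod_univ_sum, prod_const, card_univ]
    _ = ∑ x ∈ Fintype.piFinset fun _ => Dᶜ, if ∃ i, x i ∉ D then ∏ i, p (x i) else 0 :=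
        sum_congr rfl fun x hx => by
          rw [if_pos ⟨i₀, mem_compl.1 (Fintype.mem_piFinset.1 hx i₀)⟩]
    _ ≤ _ := sum_le_univ_sum_of_nonneg fun x => by
        split_ifs
        exacts [prod_nonneg fun i _ => hp (x i), le_rfl]

theorem sum_debiasedWeight_mul_mass_compl [∀ x : ι → U, Decidable (∃ i, x i ∉ D)]
    (p g : U → ℝ) (Q : ℝ) :
    (∑ x : ι → U, if ∃ i, x i ∉ D then
        (∏ i, p (x i)) * ∑ i, debiasedWeight D Q x i * g (x i) else 0) * ∑ u ∈ Dᶜ, p u =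
      Q * (∑ u ∈ Dᶜ, p u * g u) *
        ∑ x : ι → U, if ∃ i, x i ∉ D then ∏ i, p (x i) else 0 := by
  have hweighted : ∀ x : ι → U, (if ∃ i, x i ∉ D then
        (∏ i, p (x i)) * ∑ i, debiasedWeight D Q x i * g (x i) else 0) =
      ∑ i ∈ univ.filter (fun i => x i ∉ D),
        Q / ((univ.filter fun i' => x i' ∉ D).card : ℝ) * (g (x i) * ∏ j, p (x j)) := by
    intro x
    split_ifs with hx
    · rw [mul_sum, sum_filter]
      unfold debiasedWeight
      refine sum_congr rfl fun i _ => ?_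
      split_ifs <;> ring
    · simp only [not_exists, not_not] at hx
      simp [hx]
  have hmass : ∀ x : ι → U, (if ∃ i, x i ∉ D then ∏ i, p (x i) else 0) =
      if (univ.filter fun i => x i ∉ D).Nonempty then ∏ i, p (x i) else 0 := by
    simp [filter_nonempty_iff]
  simp only [hweighted, hmass]
  rw [sum_eq_sum_sum_piFinset_notMem D
      (fun A x => ∑ i ∈ A, Q / (A.card : ℝ) * (g (x i) * ∏ j, p (x j))),
    sum_eq_sum_sum_piFinset_notMem D (fun A x => if A.Nonempty then ∏ i, p (x i) else 0),
    sum_mul, mul_sum]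
  refine sum_congr rfl fun A _ => ?_
  rcases A.eq_empty_or_nonempty with rfl | hA
  · simp
  simp only [if_pos hA]
  have hcoord : ∀ i ∈ A,
      (∑ x ∈ Fintype.piFinset (fun i => if i ∈ A then Dᶜ else D),
        Q / (A.card : ℝ) * (g (x i) * ∏ j, p (x j))) * ∑ u ∈ Dᶜ, p u =
      Q / (A.card : ℝ) * ((∑ u ∈ Dᶜ, p u * g u) *
        ∑ x ∈ Fintype.piFinset (fun i => if i ∈ A then Dᶜ else D), ∏ j, p (x j)) := by
    intro i hi
    have h := sum_piFinset_apply_mul_prod_mul_sum (fun i => if i ∈ A then Dᶜ else D) p g i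
    simp only [if_pos hi] at h
    rw [← mul_sum, mul_assoc, h]
  rw [sum_comm, sum_mul, sum_congr rfl hcoord, sum_const, nsmul_eq_mul]
  have hcard : (A.card : ℝ) ≠ 0 := Nat.cast_ne_zero.2 hA.card_pos.ne'
  field_simp

end

theorem debiased_weights_conditional_expectation_general {U : Type*} [Fintype U] [DecidableEq U]
    (D : Finset U) (p : U → ℝ) (hp : ∀ u, 0 ≤ p u)
    (hpos : 0 < ∑ u ∈ Finset.univ.filter (fun u => u ∉ D), p u)
    (g : U → ℝ) (Q : ℝ) (n : ℕ) (hn : 0 < n) :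
    (∑ x : Fin n → U,
        (if ∃ i, x i ∉ D then
          (∏ i, p (x i)) *
            (∑ i, (if x i ∉ D then
                Q / ((Finset.univ.filter (fun i' : Fin n => x i' ∉ D)).card : ℝ)
              else 0) * g (x i))
        else 0)) /
      (∑ x : Fin n → U, (if ∃ i, x i ∉ D then ∏ i, p (x i) else 0))
    = Q * (∑ u ∈ Finset.univ.filter (fun u => u ∉ D), p u * g u) /
        (∑ u ∈ Finset.univ.filter (fun u => u ∉ D), p u) := by
  have hcompl : univ.filter (fun u => u ∉ D) = Dᶜ := by
    ext u
    simp
  rw [hcompl] at hpos ⊢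
  have : Nonempty (Fin n) := Fin.pos_iff_nonempty.1 hn
  have hmass : 0 < ∑ x : Fin n → U, if ∃ i, x i ∉ D then ∏ i, p (x i) else 0 :=
    (pow_pos hpos _).trans_le (pow_card_le_sum_prod_of_exists_notMem D hp)
  rw [div_eq_div_iff hmass.ne' hpos.ne']
  exact sum_debiasedWeight_mul_mass_compl D p g Q

/-- The debiased weights `π₀(u) = Q·𝟙[u ∉ D]/Σ_{u'∈N⁻}𝟙[u' ∉ D]` preserve the value in
expectation: conditioned on at least one of the i.i.d. draws `u₁,…,uₙ ~ p` landing
outside `D`, the conditional expectation of `Σ_{u∈N⁻} π₀(u)·g(u)` equals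
`Q·E_{u~p|u∉D}[g(u)]`. -/
theorem debiased_weights_conditional_expectation {U : Type*} [Fintype U] [DecidableEq U]
    (D : Finset U) (p : U → ℝ) (hp : ∀ u, 0 ≤ p u) (hpsum : ∑ u, p u = 1)
    (hpos : 0 < ∑ u ∈ Finset.univ.filter (fun u => u ∉ D), p u)
    (g : U → ℝ) (Q : ℝ) (hQ : 0 < Q) (n : ℕ) (hn : 0 < n) :
    (∑ x : Fin n → U,
        (if ∃ i, x i ∉ D then
          (∏ i, p (x i)) *
            (∑ i, (if x i ∉ D then
                Q / ((Finset.univ.filter (fun i' : Fin n => x i' ∉ D)).card : ℝ)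
              else 0) * g (x i))
        else 0)) /
      (∑ x : Fin n → U, (if ∃ i, x i ∉ D then ∏ i, p (x i) else 0))
    = Q * (∑ u ∈ Finset.univ.filter (fun u => u ∉ D), p u * g u) /
        (∑ u ∈ Finset.univ.filter (fun u => u ∉ D), p u) :=
  debiased_weights_conditional_expectation_general D p hp hpos g Q n hn
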